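/- The groups G₁ = ⟨x, y, z | x² = y³, [x,z], [y,z]⟩ and G₂ = ⟨a, b | [a, b³], [a², b]⟩ are isomorphic, via the map a ↦ xz, b ↦ yz. -/

import Mathlib

/-!
In `G₁` the element `x² = y³` commutes with `x`, `y` and `z`, so `a = xz` and `b = yz` satisfy
`[a, b³] = [a², b] = 1`. Conversely, in `G₂` both `a²` and `b³` commute with `a` and `b`, so
`z = b³a⁻²` commutes with `a` and `b`, and `x = az⁻¹`, `y = bz⁻¹` satisfy `x² = y³`. The two
substitutions are mutually inverse because `b³a⁻²` evaluates to `(yz)³(xz)⁻² = z` in `G₁`.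
-/

/-- The commutator `[u, v] = u⁻¹v⁻¹uv`. -/
def comm' {G : Type*} [Group G] (u v : G) : G := u⁻¹ * v⁻¹ * u * v

/-- Relations of Lustig's group `G₁ = ⟨x, y, z | x² = y³, [x,z], [y,z]⟩`. -/
def LustigRels1 : Set (FreeGroup (Fin 3)) :=
  {FreeGroup.of 0 ^ 2 * (FreeGroup.of 1 ^ 3)⁻¹,
   comm' (FreeGroup.of 0) (FreeGroup.of 2),
   comm' (FreeGroup.of 1) (FreeGroup.of 2)}

/-- Relations of `G₂ = ⟨a, b | [a, b³], [a², b]⟩`. -/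
def LustigRels2 : Set (FreeGroup (Fin 2)) :=
  {comm' (FreeGroup.of 0) (FreeGroup.of 1 ^ 3),
   comm' (FreeGroup.of 0 ^ 2) (FreeGroup.of 1)}

section Group

variable {G H : Type*} [Group G] [Group H]

theorem comm'_eq_one_iff {u v : G} : comm' u v = 1 ↔ Commute u v := by
  rw [comm', mul_assoc, mul_assoc, inv_mul_eq_one, eq_inv_mul_iff_mul_eq, eq_comm]
  rfl

theorem map_comm' (f : G →* H) (u v : G) : f (comm' u v) = comm' (f u) (f v) := by
  simp only [comm', map_mul, map_inv]

def lustigCentre (a b : G) : G := b ^ 3 * (a ^ 2)⁻¹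

section

variable {x y z : G}

theorem commute_mul_mul_pow_three (hxy : x ^ 2 = y ^ 3) (hxz : Commute x z) (hyz : Commute y z) :
    Commute (x * z) ((y * z) ^ 3) := by
  rw [hyz.mul_pow, ← hxy]
  exact ((Commute.self_pow x 2).mul_right (hxz.pow_right 3)).mul_left
    ((hxz.symm.pow_right 2).mul_right (Commute.self_pow z 3))

theorem commute_mul_pow_two_mul (hxy : x ^ 2 = y ^ 3) (hxz : Commute x z) (hyz : Commute y z) :
    Commute ((x * z) ^ 2) (y * z) := by
  rw [hxz.mul_pow, hxy]
  exact ((Commute.self_pow y 3).symm.mul_right (hyz.pow_left 3)).mul_left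
    ((hyz.symm.pow_left 2).mul_right (Commute.self_pow z 2).symm)

theorem lustigCentre_mul_mul (hxy : x ^ 2 = y ^ 3) (hxz : Commute x z) (hyz : Commute y z) :
    lustigCentre (x * z) (y * z) = z := by
  rw [lustigCentre, hyz.mul_pow, hxz.mul_pow, ← hxy, ((hxz.pow_left 2).pow_right 3).eq,
    ((hxz.pow_left 2).pow_right 2).eq]
  group

end

section

variable {a b : G}

theorem commute_lustigCentre_left (ha : Commute a (b ^ 3)) : Commute a (lustigCentre a b) :=
  ha.mul_right (Commute.self_pow a 2).inv_right

theorem commute_lustigCentre_right (hb : Commute (a ^ 2) b) : Commute b (lustigCentre a b) :=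
  (Commute.self_pow b 3).mul_right hb.symm.inv_right

theorem mul_inv_lustigCentre_pow_two (ha : Commute a (b ^ 3)) (hb : Commute (a ^ 2) b) :
    (a * (lustigCentre a b)⁻¹) ^ 2 = (b * (lustigCentre a b)⁻¹) ^ 3 := by
  rw [(commute_lustigCentre_left ha).inv_right.mul_pow,
    (commute_lustigCentre_right hb).inv_right.mul_pow]
  have hw : b ^ 3 * (lustigCentre a b)⁻¹ = a ^ 2 := by
    rw [lustigCentre, mul_inv_rev, inv_inv, ← mul_assoc, ← (hb.pow_right 3).eq,
      mul_inv_cancel_right]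
  rw [pow_succ' (lustigCentre a b)⁻¹ 2, ← mul_assoc, hw]

end

theorem forall_lift_lustigRels1_eq_one_iff (f : Fin 3 → G) :
    (∀ r ∈ LustigRels1, FreeGroup.lift f r = 1) ↔
      f 0 ^ 2 = f 1 ^ 3 ∧ Commute (f 0) (f 2) ∧ Commute (f 1) (f 2) := by
  simp [LustigRels1, map_comm', comm'_eq_one_iff, mul_inv_eq_one]

theorem forall_lift_lustigRels2_eq_one_iff (f : Fin 2 → G) :
    (∀ r ∈ LustigRels2, FreeGroup.lift f r = 1) ↔
      Commute (f 0) (f 1 ^ 3) ∧ Commute (f 0 ^ 2) (f 1) := by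
  simp [LustigRels2, map_comm', comm'_eq_one_iff]

end Group

open PresentedGroup

theorem PresentedGroup.lift_of_eq_one_of_mem {α : Type*} {rels : Set (FreeGroup α)}
    {r : FreeGroup α} (hr : r ∈ rels) : FreeGroup.lift (of (rels := rels)) r = 1 := by
  rw [← FreeGroup.lift_unique (f := of) (mk rels) fun _ => rfl]
  exact one_of_mem hr

theorem lustigRels1_relations :
    (of 0 : PresentedGroup LustigRels1) ^ 2 = of 1 ^ 3 ∧
      Commute (of 0 : PresentedGroup LustigRels1) (of 2) ∧
      Commute (of 1 : PresentedGroup LustigRels1) (of 2) :=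
  (forall_lift_lustigRels1_eq_one_iff _).1 fun _ => lift_of_eq_one_of_mem

theorem lustigRels2_relations :
    Commute (of 0 : PresentedGroup LustigRels2) (of 1 ^ 3) ∧
      Commute (of 0 ^ 2 : PresentedGroup LustigRels2) (of 1) :=
  (forall_lift_lustigRels2_eq_one_iff _).1 fun _ => lift_of_eq_one_of_mem

noncomputable def lustigHom : PresentedGroup LustigRels2 →* PresentedGroup LustigRels1 :=
  toGroup (f := ![of 0 * of 2, of 1 * of 2]) <| by
    obtain ⟨hxy, hxz, hyz⟩ := lustigRels1_relations
    exact (forall_lift_lustigRels2_eq_one_iff _).2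
      ⟨commute_mul_mul_pow_three hxy hxz hyz, commute_mul_pow_two_mul hxy hxz hyz⟩

theorem lustigHom_of_zero : lustigHom (of 0) = of 0 * of 2 := toGroup.of _

theorem lustigHom_of_one : lustigHom (of 1) = of 1 * of 2 := toGroup.of _

noncomputable def lustigCentre₂ : PresentedGroup LustigRels2 := lustigCentre (of 0) (of 1)

noncomputable def lustigInv : PresentedGroup LustigRels1 →* PresentedGroup LustigRels2 :=
  toGroup (f := ![of 0 * lustigCentre₂⁻¹, of 1 * lustigCentre₂⁻¹, lustigCentre₂]) <| by
    obtain ⟨ha, hb⟩ := lustigRels2_relations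
    exact (forall_lift_lustigRels1_eq_one_iff _).2
      ⟨mul_inv_lustigCentre_pow_two ha hb,
        (commute_lustigCentre_left ha).mul_left (Commute.refl _).inv_left,
        (commute_lustigCentre_right hb).mul_left (Commute.refl _).inv_left⟩

theorem lustigInv_of_zero : lustigInv (of 0) = of 0 * lustigCentre₂⁻¹ := toGroup.of _

theorem lustigInv_of_one : lustigInv (of 1) = of 1 * lustigCentre₂⁻¹ := toGroup.of _

theorem lustigInv_of_two : lustigInv (of 2) = lustigCentre₂ := toGroup.of _

theorem lustigHom_lustigCentre₂ : lustigHom lustigCentre₂ = of 2 := by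
  obtain ⟨hxy, hxz, hyz⟩ := lustigRels1_relations
  rw [lustigCentre₂, lustigCentre, map_mul, map_inv, map_pow, map_pow, lustigHom_of_zero,
    lustigHom_of_one]
  exact lustigCentre_mul_mul hxy hxz hyz

theorem lustigInv_comp_lustigHom : lustigInv.comp lustigHom = MonoidHom.id _ := by
  refine PresentedGroup.ext fun i => ?_
  fin_cases i
  · show lustigInv (lustigHom (of 0)) = of 0
    rw [lustigHom_of_zero, map_mul, lustigInv_of_zero, lustigInv_of_two, inv_mul_cancel_right]
  · show lustigInv (lustigHom (of 1)) = of 1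
    rw [lustigHom_of_one, map_mul, lustigInv_of_one, lustigInv_of_two, inv_mul_cancel_right]

theorem lustigHom_comp_lustigInv : lustigHom.comp lustigInv = MonoidHom.id _ := by
  refine PresentedGroup.ext fun i => ?_
  fin_cases i
  · show lustigHom (lustigInv (of 0)) = of 0
    rw [lustigInv_of_zero, map_mul, map_inv, lustigHom_of_zero, lustigHom_lustigCentre₂,
      mul_inv_cancel_right]
  · show lustigHom (lustigInv (of 1)) = of 1
    rw [lustigInv_of_one, map_mul, map_inv, lustigHom_of_one, lustigHom_lustigCentre₂,
      mul_inv_cancel_right]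
  · show lustigHom (lustigInv (of 2)) = of 2
    rw [lustigInv_of_two, lustigHom_lustigCentre₂]

theorem stmt_16 :
    ∃ e : PresentedGroup LustigRels2 ≃* PresentedGroup LustigRels1,
      e (PresentedGroup.of 0) = PresentedGroup.of 0 * PresentedGroup.of 2 ∧
      e (PresentedGroup.of 1) = PresentedGroup.of 1 * PresentedGroup.of 2 :=
  ⟨lustigHom.toMulEquiv lustigInv lustigInv_comp_lustigHom lustigHom_comp_lustigInv,
    lustigHom_of_zero, lustigHom_of_one⟩
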